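/- An R-module E is pure-injective if and only if for every pure embedding f : A → B of R-modules with card(A), card(B) ≤ κ and every R-homomorphism g : A → E, there is an R-homomorphism h : B → E such that h ∘ f = g. -/
import Mathlib


universe u

/-- `A` is a pure submodule of its ambient module: every finite system of
`R`-linear equations `∑ j, r i j • x j = a i` with constants `a i ∈ A` that has
a solution in the ambient module has a solution in `A`. -/
def IsPureSubmodule {R : Type*} [Ring R] {M : Type*} [AddCommGroup M] [Module R M]
    (A : Submodule R M) : Prop :=
  ∀ (m n : ℕ) (r : Fin m → Fin n → R) (a : Fin m → M),
    (∀ i, a i ∈ A) →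
    (∃ x : Fin n → M, ∀ i, (∑ j, r i j • x j) = a i) →
    ∃ x : Fin n → M, (∀ j, x j ∈ A) ∧ ∀ i, (∑ j, r i j • x j) = a i

/-- A pure embedding is an injective linear map whose image is a pure submodule
of its codomain. -/
def IsPureEmbedding {R : Type*} [Ring R] {M N : Type*} [AddCommGroup M] [Module R M]
    [AddCommGroup N] [Module R N] (f : M →ₗ[R] N) : Prop :=
  Function.Injective f ∧ IsPureSubmodule (LinearMap.range f)

/-- `E` is pure-injective: every homomorphism `g : A → E` extends along every
pure embedding `f : A → B`. -/
def PureInjective (R : Type u) [Ring R] (E : Type u) [AddCommGroup E] [Module R E] : Prop :=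
  ∀ (A B : Type u) [AddCommGroup A] [Module R A] [AddCommGroup B] [Module R B]
    (f : A →ₗ[R] B), IsPureEmbedding f →
    ∀ g : A →ₗ[R] E, ∃ h : B →ₗ[R] E, h.comp f = g

open Cardinal Submodule

section AuxPI

variable {R : Type u} [Ring R] {B : Type u} [AddCommGroup B] [Module R B]

def Prop1 (C D : Submodule R B) : Prop :=
  ∀ (m n : ℕ) (r : Fin m → Fin n → R) (a : Fin m → B),
    (∀ i, a i ∈ D) →
    (∃ x : Fin n → B, ∀ i, (∑ j, r i j • x j) - a i ∈ C) →
    ∃ x : Fin n → B, (∀ j, x j ∈ D) ∧ ∀ i, (∑ j, r i j • x j) - a i ∈ C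

def Prop2 (C D : Submodule R B) : Prop :=
  ∀ (m n : ℕ) (r : Fin m → Fin n → R) (a : Fin m → B),
    (∀ i, a i ∈ C) → (∀ i, a i ∈ D) →
    (∃ x : Fin n → B, ∀ i, (∑ j, r i j • x j) = a i) →
    ∃ x : Fin n → B, (∀ j, x j ∈ C ∧ x j ∈ D) ∧ ∀ i, (∑ j, r i j • x j) = a i

lemma kappa_mul_le {a b c : Cardinal.{u}} (ha : a ≤ c) (hb : b ≤ c) (hc : ℵ₀ ≤ c) :
    a * b ≤ c :=
  (Cardinal.mul_le_max a b).trans (by simp [max_le_iff, ha, hb, hc])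

lemma mk_fin_fun_le {X : Type u} {c : Cardinal.{u}} (hX : #X ≤ c) (hc : ℵ₀ ≤ c) (m : ℕ) :
    #(Fin m → X) ≤ c := by
  induction m with
  | zero =>
      have : Subsingleton (Fin 0 → X) := ⟨fun f g => funext fun i => i.elim0⟩
      exact le_trans (Cardinal.le_one_iff_subsingleton.2 this)
        (le_trans Cardinal.one_le_aleph0 hc)
  | succ m ih =>
      have e : (Fin (m + 1) → X) ≃ X × (Fin m → X) := (Fin.consEquiv fun _ => X).symm
      calc #(Fin (m + 1) → X) = #(X × (Fin m → X)) := Cardinal.mk_congr e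
        _ = #X * #(Fin m → X) := by simp [Cardinal.mk_prod]
        _ ≤ c := kappa_mul_le hX ih hc

lemma mk_span_le' {s : Set B} {c : Cardinal.{u}} (hR : #R ≤ c) (hs : #s ≤ c) (hc : ℵ₀ ≤ c) :
    #(Submodule.span R s) ≤ c := by
  classical
  set f : List (R × s) → B := fun l => (l.map fun p => p.1 • (p.2 : B)).sum with hf
  have lmap : ∀ (r : R) (l : List (R × s)),
      f (l.map fun p => (r * p.1, p.2)) = r • f l := by
    intro r l
    induction l with
    | nil => simp [hf]
    | cons p l ihl => simp [hf, smul_add, mul_smul] at ihl ⊢; rw [ihl]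
  have hsub : (Submodule.span R s : Set B) ⊆ Set.range f := by
    intro x hx
    induction hx using Submodule.span_induction with
    | mem x hxs => exact ⟨[(1, ⟨x, hxs⟩)], by simp [hf]⟩
    | zero => exact ⟨[], by simp [hf]⟩
    | add x y hx hy hx' hy' =>
        obtain ⟨l1, rfl⟩ := hx'; obtain ⟨l2, rfl⟩ := hy'
        exact ⟨l1 ++ l2, by simp [hf]⟩
    | smul r x hx hx' =>
        obtain ⟨l, rfl⟩ := hx'
        exact ⟨l.map fun p => (r * p.1, p.2), lmap r l⟩
  calc #(Submodule.span R s)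
      ≤ #(Set.range f) := Cardinal.mk_le_mk_of_subset hsub
    _ ≤ #(List (R × s)) := Cardinal.mk_range_le
    _ ≤ max ℵ₀ #(R × s) := Cardinal.mk_list_le_max _
    _ ≤ c := by
        refine max_le hc ?_
        have : #(R × s) = #R * #s := by simp [Cardinal.mk_prod]
        rw [this]; exact kappa_mul_le hR hs hc

lemma mk_ulift_nat : #(ULift.{u} ℕ) = ℵ₀ := by simp

lemma step_exists {C : Submodule R B} (hC : IsPureSubmodule C) (b : B) (N : Submodule R B) :
    ∃ N' : Submodule R B, N ≤ N' ∧ b ∈ N' ∧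
      (#N ≤ max #R ℵ₀ → #N' ≤ max #R ℵ₀) ∧
      (∀ (m n : ℕ) (r : Fin m → Fin n → R) (a : Fin m → B), (∀ i, a i ∈ N) →
        (∃ x : Fin n → B, ∀ i, (∑ j, r i j • x j) - a i ∈ C) →
        ∃ x : Fin n → B, (∀ j, x j ∈ N') ∧ ∀ i, (∑ j, r i j • x j) - a i ∈ C) ∧
      (∀ (m n : ℕ) (r : Fin m → Fin n → R) (a : Fin m → B), (∀ i, a i ∈ C) → (∀ i, a i ∈ N) →
        (∃ x : Fin n → B, ∀ i, (∑ j, r i j • x j) = a i) →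
        ∃ x : Fin n → B, (∀ j, x j ∈ C ∧ x j ∈ N') ∧ ∀ i, (∑ j, r i j • x j) = a i) := by
  classical
  let Sys : Type u := Σ (m : ULift.{u} ℕ) (n : ULift.{u} ℕ),
    (Fin m.down → Fin n.down → R) × (Fin m.down → ↥N)
  let w1 : ∀ t : Sys, Fin t.2.1.down → B := fun t =>
    if h : ∃ x : Fin t.2.1.down → B, ∀ i, (∑ j, t.2.2.1 i j • x j) - (t.2.2.2 i : B) ∈ C
    then h.choose else fun _ => 0
  let w2 : ∀ t : Sys, Fin t.2.1.down → B := fun t =>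
    if h : (∀ i, (t.2.2.2 i : B) ∈ C) ∧
        ∃ x : Fin t.2.1.down → B, ∀ i, (∑ j, t.2.2.1 i j • x j) = (t.2.2.2 i : B)
    then (hC _ _ t.2.2.1 (fun i => (t.2.2.2 i : B)) h.1 h.2).choose else fun _ => 0
  let U : Set B := (N : Set B) ∪ ({b} ∪ ((⋃ t, Set.range (w1 t)) ∪ (⋃ t, Set.range (w2 t))))
  refine ⟨Submodule.span R U, fun x hx => Submodule.subset_span (Or.inl hx),
    Submodule.subset_span (Or.inr (Or.inl rfl)), ?_, ?_, ?_⟩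
  · -- cardinality
    intro hN
    have hℵ : ℵ₀ ≤ max #R ℵ₀ := le_max_right _ _
    have hR : #R ≤ max #R ℵ₀ := le_max_left _ _
    have hfin : ∀ (m n : ℕ), #((Fin m → Fin n → R) × (Fin m → ↥N)) ≤ max #R ℵ₀ := by
      intro m n
      have h1 : #(Fin m → Fin n → R) ≤ max #R ℵ₀ :=
        mk_fin_fun_le (mk_fin_fun_le hR hℵ n) hℵ m
      have h2 : #(Fin m → ↥N) ≤ max #R ℵ₀ := mk_fin_fun_le hN hℵ m
      calc #((Fin m → Fin n → R) × (Fin m → ↥N))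
          = #(Fin m → Fin n → R) * #(Fin m → ↥N) := by simp [Cardinal.mk_prod]
        _ ≤ max #R ℵ₀ := kappa_mul_le h1 h2 hℵ
    have hSys : #Sys ≤ max #R ℵ₀ := by
      rw [show Sys = Σ (m : ULift.{u} ℕ) (n : ULift.{u} ℕ),
        ((Fin m.down → Fin n.down → R) × (Fin m.down → ↥N)) from rfl, Cardinal.mk_sigma]
      calc (Cardinal.sum fun m : ULift.{u} ℕ => #(Σ n : ULift.{u} ℕ,
            ((Fin m.down → Fin n.down → R) × (Fin m.down → ↥N))))
          ≤ Cardinal.sum fun _ : ULift.{u} ℕ => max #R ℵ₀ := by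
            refine Cardinal.sum_le_sum _ _ fun m => ?_
            rw [Cardinal.mk_sigma]
            calc (Cardinal.sum fun n : ULift.{u} ℕ =>
                  #((Fin m.down → Fin n.down → R) × (Fin m.down → ↥N)))
                ≤ Cardinal.sum fun _ : ULift.{u} ℕ => max #R ℵ₀ :=
                  Cardinal.sum_le_sum _ _ fun n => hfin _ _
              _ = #(ULift.{u} ℕ) * max #R ℵ₀ := Cardinal.sum_const' _ _
              _ ≤ max #R ℵ₀ := by
                  rw [mk_ulift_nat]; exact kappa_mul_le hℵ le_rfl hℵ
        _ = #(ULift.{u} ℕ) * max #R ℵ₀ := Cardinal.sum_const' _ _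
        _ ≤ max #R ℵ₀ := by rw [mk_ulift_nat]; exact kappa_mul_le hℵ le_rfl hℵ
    have hW : ∀ w : ∀ t : Sys, Fin t.2.1.down → B,
        #(⋃ t, Set.range (w t)) ≤ max #R ℵ₀ := by
      intro w
      calc #(⋃ t, Set.range (w t))
          ≤ Cardinal.sum fun t => #(Set.range (w t)) := Cardinal.mk_iUnion_le_sum_mk
        _ ≤ Cardinal.sum fun _ : Sys => ℵ₀ := by
            refine Cardinal.sum_le_sum _ _ fun t => ?_
            exact le_of_lt (Set.Finite.lt_aleph0 (Set.finite_range (w t)))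
        _ = #Sys * ℵ₀ := Cardinal.sum_const' _ _
        _ ≤ max #R ℵ₀ := kappa_mul_le hSys hℵ hℵ
    have hU : #U ≤ max #R ℵ₀ := by
      refine le_trans (Cardinal.mk_union_le _ _) (Cardinal.add_le_of_le hℵ hN ?_)
      refine le_trans (Cardinal.mk_union_le _ _) (Cardinal.add_le_of_le hℵ ?_ ?_)
      · simpa using le_trans Cardinal.one_le_aleph0 hℵ
      · exact le_trans (Cardinal.mk_union_le _ _)
          (Cardinal.add_le_of_le hℵ (hW w1) (hW w2))
    exact mk_span_le' hR hU hℵ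
  · -- Prop1 step
    intro m n r a haN hsol
    let t : Sys := ⟨⟨m⟩, ⟨n⟩, r, fun i => ⟨a i, haN i⟩⟩
    have hcond : ∃ x : Fin n → B, ∀ i, (∑ j, t.2.2.1 i j • x j) - (t.2.2.2 i : B) ∈ C := hsol
    have hw : w1 t = hcond.choose := dif_pos hcond
    refine ⟨w1 t, fun j => Submodule.subset_span
      (Or.inr (Or.inr (Or.inl (Set.mem_iUnion.2 ⟨t, Set.mem_range_self j⟩)))), ?_⟩
    rw [hw]; exact hcond.choose_spec
  · -- Prop2 step
    intro m n r a haC haN hsol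
    let t : Sys := ⟨⟨m⟩, ⟨n⟩, r, fun i => ⟨a i, haN i⟩⟩
    have hcond : (∀ i, (t.2.2.2 i : B) ∈ C) ∧
        ∃ x : Fin n → B, ∀ i, (∑ j, t.2.2.1 i j • x j) = (t.2.2.2 i : B) := ⟨haC, hsol⟩
    have hw : w2 t = (hC _ _ t.2.2.1 (fun i => (t.2.2.2 i : B)) hcond.1 hcond.2).choose :=
      dif_pos hcond
    have hspec := (hC _ _ t.2.2.1 (fun i => (t.2.2.2 i : B)) hcond.1 hcond.2).choose_spec
    refine ⟨w2 t, fun j => ⟨by rw [hw]; exact hspec.1 j, Submodule.subset_span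
      (Or.inr (Or.inr (Or.inr (Set.mem_iUnion.2 ⟨t, Set.mem_range_self j⟩))))⟩, ?_⟩
    rw [hw]; exact hspec.2

lemma exists_good_D {C : Submodule R B} (hC : IsPureSubmodule C) (b : B) :
    ∃ D : Submodule R B, b ∈ D ∧ #D ≤ max #R ℵ₀ ∧ Prop1 C D ∧ Prop2 C D := by
  classical
  choose F hle hb hcard hP1 hP2 using step_exists hC b
  let Dn : ℕ → Submodule R B := fun k => Nat.rec (F ⊥) (fun _ N => F N) k
  have hsucc : ∀ k, Dn (k + 1) = F (Dn k) := fun k => rfl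
  have mono : Monotone Dn := monotone_nat_of_le_succ (fun k => hle (Dn k))
  let Dchain : ℕ →o Submodule R B := ⟨Dn, mono⟩
  refine ⟨⨆ k, Dn k, ?_, ?_, ?_, ?_⟩
  · exact (Submodule.mem_iSup_of_chain Dchain b).2 ⟨0, hb ⊥⟩
  · -- cardinality
    have hℵ : ℵ₀ ≤ max #R ℵ₀ := le_max_right _ _
    have hbot : #(⊥ : Submodule R B) ≤ max #R ℵ₀ := by
      refine le_trans (Cardinal.le_one_iff_subsingleton.2 ?_) (le_trans Cardinal.one_le_aleph0 hℵ)
      exact ⟨fun x y => Subtype.ext (by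
        have hx := x.2; have hy := y.2
        simp only [Submodule.mem_bot] at hx hy
        rw [hx, hy])⟩
    have hDk : ∀ k, #(↥(Dn k)) ≤ max #R ℵ₀ := by
      intro k
      induction k with
      | zero => exact hcard ⊥ hbot
      | succ k ih => exact hcard (Dn k) ih
    have hcoe : ((⨆ k, Dn k : Submodule R B) : Set B)
        = ⋃ (k : ULift.{u} ℕ), (SetLike.coe (Dn k.down)) := by
      have h0 : (↑(⨆ k, Dchain k) : Set B) = ⋃ k, ↑(Dchain k) :=
        Submodule.coe_iSup_of_chain Dchain
      rw [show (⨆ k, Dn k) = ⨆ k, Dchain k from rfl, h0]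
      ext x
      simp only [Set.mem_iUnion]
      exact ⟨fun ⟨k, h⟩ => ⟨⟨k⟩, h⟩, fun ⟨k, h⟩ => ⟨k.down, h⟩⟩
    calc #(↥(⨆ k, Dn k : Submodule R B))
        = #(⋃ (k : ULift.{u} ℕ), (SetLike.coe (Dn k.down))) :=
          Cardinal.mk_congr (Equiv.setCongr hcoe)
      _ ≤ Cardinal.sum fun k : ULift.{u} ℕ => #((SetLike.coe (Dn k.down))) := Cardinal.mk_iUnion_le_sum_mk
      _ ≤ Cardinal.sum fun _ : ULift.{u} ℕ => max #R ℵ₀ := by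
          refine Cardinal.sum_le_sum _ _ fun k => ?_
          exact hDk k.down
      _ = #(ULift.{u} ℕ) * max #R ℵ₀ := Cardinal.sum_const' _ _
      _ ≤ max #R ℵ₀ := by rw [mk_ulift_nat]; exact kappa_mul_le hℵ le_rfl hℵ
  · -- Prop1
    intro m n r a haD hsol
    have common : ∃ k, ∀ i, a i ∈ Dn k := by
      choose k hk using fun i => (Submodule.mem_iSup_of_chain Dchain (a i)).1 (haD i)
      exact ⟨Finset.univ.sup k, fun i => mono (Finset.le_sup (Finset.mem_univ i)) (hk i)⟩
    obtain ⟨k, hk⟩ := common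
    obtain ⟨x, hxN, hxC⟩ := hP1 (Dn k) m n r a hk hsol
    exact ⟨x, fun j => (Submodule.mem_iSup_of_chain Dchain (x j)).2 ⟨k + 1, hxN j⟩, hxC⟩
  · -- Prop2
    intro m n r a haC haD hsol
    have common : ∃ k, ∀ i, a i ∈ Dn k := by
      choose k hk using fun i => (Submodule.mem_iSup_of_chain Dchain (a i)).1 (haD i)
      exact ⟨Finset.univ.sup k, fun i => mono (Finset.le_sup (Finset.mem_univ i)) (hk i)⟩
    obtain ⟨k, hk⟩ := common
    obtain ⟨x, hxN, hxC⟩ := hP2 (Dn k) m n r a haC hk hsol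
    exact ⟨x, fun j => ⟨(hxN j).1,
      (Submodule.mem_iSup_of_chain Dchain (x j)).2 ⟨k + 1, (hxN j).2⟩⟩, hxC⟩

lemma pure_sup {C D : Submodule R B} (hC : IsPureSubmodule C) (hD : Prop1 C D) :
    IsPureSubmodule (C ⊔ D) := by
  intro m n r a ha ⟨y, hy⟩
  choose c hc' d hd' hcd using fun i => Submodule.mem_sup.1 (ha i)
  obtain ⟨x, hxD, hxC⟩ := hD m n r d hd' ⟨y, fun i => by
    have : (∑ j, r i j • y j) - d i = c i := by rw [hy i, ← hcd i]; abel
    rw [this]; exact hc' i⟩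
  -- u i := ∑ r x - d i ∈ C
  obtain ⟨z, hzC, hz⟩ := hC m n r (fun i => c i - ((∑ j, r i j • x j) - d i))
    (fun i => sub_mem (hc' i) (hxC i))
    ⟨fun j => y j - x j, fun i => by
      have : (∑ j, r i j • (y j - x j)) = (∑ j, r i j • y j) - ∑ j, r i j • x j := by
        simp [smul_sub, Finset.sum_sub_distrib]
      rw [this, hy i, ← hcd i]; abel⟩
  refine ⟨fun j => x j + z j, fun j => Submodule.add_mem _
    (Submodule.mem_sup_right (hxD j)) (Submodule.mem_sup_left (hzC j)), fun i => ?_⟩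
  have : (∑ j, r i j • (x j + z j)) = (∑ j, r i j • x j) + ∑ j, r i j • z j := by
    simp [smul_add, Finset.sum_add_distrib]
  rw [this, hz i, ← hcd i]; abel

lemma pure_embedding_inclusion {C D : Submodule R B} (h2 : Prop2 C D) :
    IsPureSubmodule (LinearMap.range (Submodule.inclusion (inf_le_right : C ⊓ D ≤ D))) := by
  intro m n r a ha ⟨x, hx⟩
  have hamem : ∀ i, (a i : B) ∈ C ∧ (a i : B) ∈ D := by
    intro i
    obtain ⟨y, hy⟩ := ha i
    have : ((a i : ↥D) : B) = (y : B) := by rw [← hy]; rfl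
    rw [this]; exact ⟨(y.2 : (y : B) ∈ C ⊓ D).1, (y.2 : (y : B) ∈ C ⊓ D).2⟩
  have hcast : ∀ (v : Fin n → ↥D) (i : Fin m),
      ((∑ j, r i j • v j : ↥D) : B) = ∑ j, r i j • (v j : B) := by
    intro v i
    simpa using map_sum D.subtype (fun j => r i j • v j) Finset.univ
  obtain ⟨x', hx', hx'eq⟩ := h2 m n r (fun i => (a i : B))
    (fun i => (hamem i).1) (fun i => (hamem i).2)
    ⟨fun j => (x j : B), fun i => by rw [← hcast x i, hx i]⟩
  refine ⟨fun j => ⟨x' j, (hx' j).2⟩, fun j => ⟨⟨x' j, ⟨(hx' j).1, (hx' j).2⟩⟩, rfl⟩, fun i => ?_⟩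
  apply Subtype.ext
  rw [hcast]
  exact hx'eq i


end AuxPI


theorem stmt10 (R : Type u) [Ring R] (E : Type u) [AddCommGroup E] [Module R E] :
    PureInjective R E ↔
      ∀ (A B : Type u) [AddCommGroup A] [Module R A] [AddCommGroup B] [Module R B]
        (f : A →ₗ[R] B), IsPureEmbedding f →
        Cardinal.mk A ≤ max (Cardinal.mk R) Cardinal.aleph0 →
        Cardinal.mk B ≤ max (Cardinal.mk R) Cardinal.aleph0 →
        ∀ g : A →ₗ[R] E, ∃ h : B →ₗ[R] E, h.comp f = g := by
  constructor
  · intro H A B _ _ _ _ f hf _ _ g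
    exact H A B f hf g
  · intro H A Bm _ _ _ _ f hf g
    classical
    set A' := LinearMap.range f with hA'
    let e : A ≃ₗ[R] ↥A' := LinearEquiv.ofInjective f hf.1
    let g' : ↥A' →ₗ[R] E := g.comp e.symm.toLinearMap
    let p₀ : Bm →ₗ.[R] E := ⟨A', g'⟩
    let S : Set (Bm →ₗ.[R] E) := {p | p₀ ≤ p ∧ IsPureSubmodule p.domain}
    have hp₀S : p₀ ∈ S := ⟨le_refl _, hf.2⟩
    have hchain : ∀ c ⊆ S, IsChain (· ≤ ·) c → ∀ y ∈ c, ∃ ub ∈ S, ∀ z ∈ c, z ≤ ub := by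
      intro c hcS hch y hyc
      have hdir : DirectedOn (· ≤ ·) c := hch.directedOn
      refine ⟨LinearPMap.sSup c hdir, ⟨le_trans (hcS hyc).1 (LinearPMap.le_sSup hdir hyc), ?_⟩,
        fun z hz => LinearPMap.le_sSup hdir hz⟩
      intro m n r a ha hsol
      have hdir' : DirectedOn (· ≤ ·) (LinearPMap.domain '' c) := by
        rintro _ ⟨p, hp, rfl⟩ _ ⟨q, hq, rfl⟩
        obtain ⟨z, hz, h1, h2⟩ := hdir p hp q hq
        exact ⟨z.domain, ⟨z, hz, rfl⟩, h1.1, h2.1⟩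
      have hne : (LinearPMap.domain '' c).Nonempty := ⟨y.domain, y, hyc, rfl⟩
      have key : ∀ (m : ℕ) (a : Fin m → Bm),
          (∀ i, a i ∈ sSup (LinearPMap.domain '' c)) →
          ∃ N ∈ LinearPMap.domain '' c, ∀ i, a i ∈ N := by
        intro m
        induction m with
        | zero =>
            intro a _
            obtain ⟨N, hN⟩ := hne
            exact ⟨N, hN, fun i => i.elim0⟩
        | succ m ih =>
            intro a ha
            obtain ⟨N, hN, hNa⟩ := ih (fun i => a i.succ) (fun i => ha i.succ)
            obtain ⟨N0, hN0, h0⟩ := (Submodule.mem_sSup_of_directed hne hdir').1 (ha 0)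
            obtain ⟨N2, hN2, hle1, hle2⟩ := hdir' N hN N0 hN0
            refine ⟨N2, hN2, fun i => ?_⟩
            refine Fin.cases (hle2 h0) (fun j => hle1 (hNa j)) i
      obtain ⟨N, hNmem, hNa⟩ := key m a ha
      obtain ⟨p, hpc, rfl⟩ := hNmem
      obtain ⟨x, hxN, hx⟩ := (hcS hpc).2 m n r a hNa hsol
      refine ⟨x, fun j => ?_, hx⟩
      have hmem : p.domain ∈ LinearPMap.domain '' c := ⟨p, hpc, rfl⟩
      exact (le_sSup hmem : p.domain ≤ sSup (LinearPMap.domain '' c)) (hxN j)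
    obtain ⟨p, hple, hpmax⟩ := zorn_le_nonempty₀ S hchain p₀ hp₀S
    have hpS : p ∈ S := hpmax.1
    have htop : p.domain = ⊤ := by
      by_contra hnetop
      obtain ⟨b, hb⟩ : ∃ b, b ∉ p.domain := by
        by_contra hall
        push_neg at hall
        exact hnetop (Submodule.eq_top_iff'.2 hall)
      obtain ⟨D, hbD, hDcard, hD1, hD2⟩ := exists_good_D hpS.2 b
      let ι : ↥(p.domain ⊓ D) →ₗ[R] ↥D :=
        Submodule.inclusion (inf_le_right : p.domain ⊓ D ≤ D)
      have hιpure : IsPureEmbedding ι :=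
        ⟨Submodule.inclusion_injective _, pure_embedding_inclusion hD2⟩
      have hcard1 : #(↥(p.domain ⊓ D)) ≤ max #R ℵ₀ :=
        le_trans (Cardinal.mk_le_of_injective
          (Submodule.inclusion_injective (inf_le_right : p.domain ⊓ D ≤ D))) hDcard
      obtain ⟨h'', hh''⟩ := H (↥(p.domain ⊓ D)) (↥D) ι hιpure hcard1 hDcard
        (p.toFun.comp (Submodule.inclusion (inf_le_left : p.domain ⊓ D ≤ p.domain)))
      let q : Bm →ₗ.[R] E := ⟨D, h''⟩
      have hagree : ∀ (x : ↥p.domain) (y : ↥q.domain), (x : Bm) = y → p x = q y := by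
        intro x y hxy
        have hmem : (x : Bm) ∈ p.domain ⊓ D := ⟨x.2, hxy ▸ y.2⟩
        have h2 := LinearMap.congr_fun hh'' ⟨(x : Bm), hmem⟩
        simp only [LinearMap.comp_apply] at h2
        have h3 : q y = h'' (ι ⟨(x : Bm), hmem⟩) := by
          apply congrArg
          exact Subtype.ext hxy.symm
        have h4 : p.toFun ((Submodule.inclusion (inf_le_left : p.domain ⊓ D ≤ p.domain))
            ⟨(x : Bm), hmem⟩) = p x := by
          apply congrArg
          exact Subtype.ext rfl
        rw [h3, h2, h4]
      let pq := p.sup q hagree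
      have hpqS : pq ∈ S := by
        refine ⟨le_trans (le_trans hple (le_refl p)) (p.left_le_sup q hagree), ?_⟩
        exact pure_sup hpS.2 hD1
      have hle' : pq ≤ p := hpmax.2 hpqS (p.left_le_sup q hagree)
      exact hb (hle'.1 (Submodule.mem_sup_right hbD))
    let etop : ↥p.domain ≃ₗ[R] Bm := LinearEquiv.ofTop p.domain htop
    refine ⟨p.toFun.comp etop.symm.toLinearMap, ?_⟩
    ext a
    have hfa : f a ∈ A' := ⟨a, rfl⟩
    have h1 : etop.symm (f a) = ⟨f a, htop ▸ trivial⟩ :=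
      LinearEquiv.ofTop_symm_apply _ _
    have hle2 := hple.2 (x := ⟨f a, hfa⟩) (y := ⟨f a, htop ▸ trivial⟩) rfl
    have h5 : e.symm ⟨f a, hfa⟩ = a := by
      have he : e a = ⟨f a, hfa⟩ := Subtype.ext (LinearEquiv.ofInjective_apply f a)
      rw [← he, LinearEquiv.symm_apply_apply]
    calc (p.toFun.comp etop.symm.toLinearMap) (f a)
        = p (etop.symm (f a)) := rfl
      _ = p ⟨f a, htop ▸ trivial⟩ := by rw [h1]
      _ = p₀ ⟨f a, hfa⟩ := hle2.symm
      _ = g' ⟨f a, hfa⟩ := rfl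
      _ = g a := by simp only [g', LinearMap.comp_apply, LinearEquiv.coe_toLinearMap]; rw [h5]
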